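/- Let p₁ = N(μ₁, Σ), p₂ = N(μ₂, Σ) be homoscedastic Gaussian densities on ℝ^D with Σ positive definite, μ₁ ≠ μ₂. Let μ = (μ₁+μ₂)/2 and define α(x) = exp(½(x−μ)ᵀΣ⁻¹(x−μ)). Then for all x ∈ ℝ^D, (∇log α(x))ᵀ(∇log p₁(x) − ∇log p₂(x)) + ½(∇²p₁(x)/p₁(x) − ∇²p₂(x)/p₂(x)) = 0, i.e., α makes the leading-order bias term B_{α;p₁,p₂} vanish identically. -/

import Mathlib

open Real

/-- Laplacian of a scalar function on `ℝ^D`. -/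
noncomputable def lap {D : ℕ} (f : EuclideanSpace ℝ (Fin D) → ℝ)
    (x : EuclideanSpace ℝ (Fin D)) : ℝ :=
  ∑ i, fderiv ℝ (fun y => fderiv ℝ f y (EuclideanSpace.single i 1)) x
      (EuclideanSpace.single i 1)

/-- Quadratic form `vᵀ M v`. -/
def quadForm {D : ℕ} (M : Matrix (Fin D) (Fin D) ℝ) (v : Fin D → ℝ) : ℝ :=
  ∑ i, ∑ j, v i * M i j * v j

/-- Multivariate Gaussian density `N(x; μ, S)` on `ℝ^D`. -/
noncomputable def gaussDensity {D : ℕ} (μ : Fin D → ℝ)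
    (S : Matrix (Fin D) (Fin D) ℝ) (x : EuclideanSpace ℝ (Fin D)) : ℝ :=
  (2 * π) ^ (-(D : ℝ) / 2) * S.det ^ (-(1 : ℝ) / 2) *
    Real.exp (-(1 / 2) * quadForm S⁻¹ (fun i => x i - μ i))

/-!
Write `A = Σ⁻¹` as a self-adjoint operator on `ℝ^D` and `wₖ = A (x - μₖ)`. Since
`∇⟪y - c, A (y - c)⟫ = 2 A (y - c)`, we get `∇ log pₖ = -wₖ` and `∇ log α = A (x - μ) = (w₁ + w₂) / 2`.
The Laplacian is the trace of the Jacobian of the gradient field `-pₖ(y) A (y - μₖ)`, which gives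
`Δpₖ / pₖ = ‖wₖ‖² - tr A`. The bias is then `⟪(w₁ + w₂) / 2, w₂ - w₁⟫ + (‖w₁‖² - ‖w₂‖²) / 2 = 0`.
-/

open InnerProductSpace Matrix WithLp
open scoped RealInnerProductSpace

section

variable {E : Type*} [NormedAddCommGroup E] [InnerProductSpace ℝ E] [CompleteSpace E]
  {A : E →L[ℝ] E}

theorem hasGradientAt_inner_sub_apply_sub (hA : IsSelfAdjoint A) (c x : E) :
    HasGradientAt (fun y => ⟪y - c, A (y - c)⟫) ((2 : ℝ) • A (x - c)) x := by
  have hsub := (hasFDerivAt_id (𝕜 := ℝ) x).sub_const c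
  rw [hasGradientAt_iff_hasFDerivAt]
  refine (hsub.inner ℝ (A.hasFDerivAt.comp x hsub)).congr_fderiv ?_
  ext v
  simp only [ContinuousLinearMap.comp_apply, ContinuousLinearMap.prod_apply, fderivInnerCLM_apply,
    Function.comp_apply, ContinuousLinearMap.coe_id', id_eq, toDual_apply_apply]
  have hsymm : ⟪A (x - c), v⟫ = ⟪x - c, A v⟫ := hA.isSymmetric (x - c) v
  rw [← hsymm, real_inner_smul_left, real_inner_comm v]
  ring

theorem gradient_const_add_mul_inner_sub_apply_sub (hA : IsSelfAdjoint A) (b t : ℝ) (c x : E) :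
    gradient (fun y => b + t * ⟪y - c, A (y - c)⟫) x = (2 * t) • A (x - c) := by
  have h := ((hasGradientAt_inner_sub_apply_sub hA c x).hasFDerivAt.const_mul t).const_add b
  refine (hasGradientAt_iff_hasFDerivAt.2 (h.congr_fderiv ?_)).gradient
  ext v
  simp only [map_sub, map_smul, _root_.smul_apply, _root_.sub_apply, toDual_apply_apply, smul_eq_mul]
  ring

theorem hasGradientAt_mul_exp_inner_sub_apply_sub (hA : IsSelfAdjoint A) (a : ℝ) (c x : E) :
    HasGradientAt (fun y => a * exp (-(1 / 2) * ⟪y - c, A (y - c)⟫))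
      (-(a * exp (-(1 / 2) * ⟪x - c, A (x - c)⟫)) • A (x - c)) x := by
  have h := (((hasGradientAt_inner_sub_apply_sub hA c x).hasFDerivAt.const_mul
    (-(1 / 2) : ℝ)).exp).const_mul a
  refine hasGradientAt_iff_hasFDerivAt.2 (h.congr_fderiv ?_)
  ext v
  simp only [map_sub, map_smul, _root_.smul_apply, _root_.sub_apply,
    toDual_apply_apply, smul_eq_mul]
  ring

end

theorem Matrix.IsHermitian.isSelfAdjoint_toEuclideanCLM {𝕜 n : Type*} [RCLike 𝕜] [Fintype n]
    [DecidableEq n] {M : Matrix n n 𝕜} (hM : M.IsHermitian) :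
    IsSelfAdjoint (toEuclideanCLM (𝕜 := 𝕜) M) :=
  hM.isSelfAdjoint.map _

noncomputable def gaussNormalizer (D : ℕ) (S : Matrix (Fin D) (Fin D) ℝ) : ℝ :=
  (2 * π) ^ (-(D : ℝ) / 2) * S.det ^ (-(1 : ℝ) / 2)

section

variable {D : ℕ}

theorem lap_eq_sum_inner_of_hasGradientAt {f : EuclideanSpace ℝ (Fin D) → ℝ}
    {G : EuclideanSpace ℝ (Fin D) → EuclideanSpace ℝ (Fin D)}
    {G' : EuclideanSpace ℝ (Fin D) →L[ℝ] EuclideanSpace ℝ (Fin D)} {x : EuclideanSpace ℝ (Fin D)}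
    (hf : ∀ y, HasGradientAt f (G y) y) (hG : HasFDerivAt G G' x) :
    lap f x = ∑ i, ⟪G' (EuclideanSpace.single i 1), EuclideanSpace.single i 1⟫ := by
  refine Finset.sum_congr rfl fun i _ => ?_
  have hpartial : (fun y => fderiv ℝ f y (EuclideanSpace.single i 1))
      = fun y => ⟪G y, EuclideanSpace.single i 1⟫ := by
    funext y
    rw [(hf y).hasFDerivAt.fderiv, toDual_apply_apply]
  rw [hpartial, (hG.inner ℝ (hasFDerivAt_const _ x)).fderiv]
  simp only [ContinuousLinearMap.comp_apply, ContinuousLinearMap.prod_apply, _root_.zero_apply,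
    fderivInnerCLM_apply, inner_zero_right, zero_add]

theorem quadForm_sub_eq_inner (M : Matrix (Fin D) (Fin D) ℝ) (ν : Fin D → ℝ)
    (y : EuclideanSpace ℝ (Fin D)) :
    quadForm M (fun i => y i - ν i) = ⟪y - toLp 2 ν, toEuclideanCLM (𝕜 := ℝ) M (y - toLp 2 ν)⟫ := by
  rw [inner_toEuclideanCLM]
  simp only [quadForm, dotProduct, mulVec, Finset.mul_sum, PiLp.sub_apply]
  exact Finset.sum_congr rfl fun i _ => Finset.sum_congr rfl fun j _ => by ring

theorem lap_mul_exp_inner_sub_toEuclideanCLM_sub {M : Matrix (Fin D) (Fin D) ℝ}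
    (hM : M.IsHermitian) (a : ℝ) (c x : EuclideanSpace ℝ (Fin D)) :
    lap (fun y => a * exp (-(1 / 2) * ⟪y - c, toEuclideanCLM (𝕜 := ℝ) M (y - c)⟫)) x
      = a * exp (-(1 / 2) * ⟪x - c, toEuclideanCLM (𝕜 := ℝ) M (x - c)⟫)
        * (‖toEuclideanCLM (𝕜 := ℝ) M (x - c)‖ ^ 2 - M.trace) := by
  set A := toEuclideanCLM (𝕜 := ℝ) M
  set p := fun y => a * exp (-(1 / 2) * ⟪y - c, A (y - c)⟫)
  have hf : ∀ y, HasGradientAt p (-p y • A (y - c)) y :=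
    hasGradientAt_mul_exp_inner_sub_apply_sub hM.isSelfAdjoint_toEuclideanCLM a c
  set w := A (x - c)
  have hG : HasFDerivAt (fun y => -p y • A (y - c)) (p x • ((innerSL ℝ w).smulRight w - A)) x := by
    refine ((hf x).hasFDerivAt.neg.smul
      (A.hasFDerivAt.comp x ((hasFDerivAt_id (𝕜 := ℝ) x).sub_const c))).congr_fderiv ?_
    refine ContinuousLinearMap.ext fun v => ?_
    simp only [_root_.add_apply, _root_.smul_apply, _root_.sub_apply, _root_.neg_apply,
      ContinuousLinearMap.comp_id, ContinuousLinearMap.smulRight_apply, toDual_apply_apply,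
      innerSL_apply_apply, real_inner_smul_left, Function.comp_apply, id_eq, Pi.neg_apply]
    module
  have hdiag : ∀ i, A (EuclideanSpace.single i 1) i = M i i := by
    simp [A]
  rw [lap_eq_sum_inner_of_hasGradientAt hf hG]
  calc ∑ i, ⟪(p x • ((innerSL ℝ w).smulRight w - A)) (EuclideanSpace.single i 1),
        EuclideanSpace.single i 1⟫
      = ∑ i, p x * (w i ^ 2 - M i i) := by
        refine Finset.sum_congr rfl fun i _ => ?_
        simp only [_root_.smul_apply, _root_.sub_apply, ContinuousLinearMap.smulRight_apply,
          innerSL_apply_apply, EuclideanSpace.inner_single_right, PiLp.smul_apply, PiLp.sub_apply,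
          hdiag, conj_trivial, one_mul, smul_eq_mul]
        ring
    _ = p x * (‖w‖ ^ 2 - M.trace) := by
      rw [EuclideanSpace.real_norm_sq_eq, Matrix.trace, ← Finset.sum_sub_distrib, Finset.mul_sum]
      rfl

theorem gaussNormalizer_pos {S : Matrix (Fin D) (Fin D) ℝ} (hS : S.PosDef) :
    0 < gaussNormalizer D S :=
  mul_pos (rpow_pos_of_pos (by positivity) _) (rpow_pos_of_pos hS.det_pos _)

theorem gaussDensity_eq_mul_exp_inner (μ : Fin D → ℝ) (S : Matrix (Fin D) (Fin D) ℝ) :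
    gaussDensity μ S = fun y => gaussNormalizer D S *
      exp (-(1 / 2) * ⟪y - toLp 2 μ, toEuclideanCLM (𝕜 := ℝ) S⁻¹ (y - toLp 2 μ)⟫) := by
  funext y
  rw [gaussDensity, quadForm_sub_eq_inner, gaussNormalizer]

theorem gradient_log_gaussDensity {S : Matrix (Fin D) (Fin D) ℝ} (hS : S.PosDef) (μ : Fin D → ℝ)
    (x : EuclideanSpace ℝ (Fin D)) :
    gradient (fun y => log (gaussDensity μ S y)) x
      = -toEuclideanCLM (𝕜 := ℝ) S⁻¹ (x - toLp 2 μ) := by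
  have hlog : (fun y => log (gaussDensity μ S y)) = fun y => log (gaussNormalizer D S)
      + -(1 / 2) * ⟪y - toLp 2 μ, toEuclideanCLM (𝕜 := ℝ) S⁻¹ (y - toLp 2 μ)⟫ := by
    funext y
    rw [gaussDensity_eq_mul_exp_inner, log_mul (gaussNormalizer_pos hS).ne' (exp_ne_zero _),
      log_exp]
  rw [hlog, gradient_const_add_mul_inner_sub_apply_sub (hS.inv.isHermitian.isSelfAdjoint_toEuclideanCLM)]
  norm_num

theorem lap_gaussDensity_div {S : Matrix (Fin D) (Fin D) ℝ} (hS : S.PosDef) (μ : Fin D → ℝ)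
    (x : EuclideanSpace ℝ (Fin D)) :
    lap (gaussDensity μ S) x / gaussDensity μ S x
      = ‖toEuclideanCLM (𝕜 := ℝ) S⁻¹ (x - toLp 2 μ)‖ ^ 2 - S⁻¹.trace := by
  rw [gaussDensity_eq_mul_exp_inner, lap_mul_exp_inner_sub_toEuclideanCLM_sub hS.inv.isHermitian,
    mul_div_cancel_left₀ _ (mul_pos (gaussNormalizer_pos hS) (exp_pos _)).ne']

end

theorem optimal_weight_kills_bias_general {D : ℕ}
    (μ₁ μ₂ : Fin D → ℝ) (S : Matrix (Fin D) (Fin D) ℝ)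
    (hS : S.PosDef) :
    let μ : Fin D → ℝ := fun i => (μ₁ i + μ₂ i) / 2
    let α : EuclideanSpace ℝ (Fin D) → ℝ := fun x =>
      Real.exp ((1 / 2) * quadForm S⁻¹ (fun i => x i - μ i))
    let p₁ := gaussDensity μ₁ S
    let p₂ := gaussDensity μ₂ S
    ∀ x : EuclideanSpace ℝ (Fin D),
      (inner ℝ (gradient (fun y => Real.log (α y)) x)
          (gradient (fun y => Real.log (p₁ y)) x
            - gradient (fun y => Real.log (p₂ y)) x) : ℝ)
        + (1 / 2) * (lap p₁ x / p₁ x - lap p₂ x / p₂ x) = 0 := by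
  intro μ α p₁ p₂ x
  have hlogα : (fun y => log (α y)) = fun y => 0 + 1 / 2 *
      ⟪y - toLp 2 μ, toEuclideanCLM (𝕜 := ℝ) S⁻¹ (y - toLp 2 μ)⟫ := by
    funext y
    rw [log_exp, quadForm_sub_eq_inner, zero_add]
  have hmid : x - toLp 2 μ = (1 / 2 : ℝ) • ((x - toLp 2 μ₁) + (x - toLp 2 μ₂)) := by
    ext i
    simp only [μ, PiLp.sub_apply, PiLp.smul_apply, PiLp.add_apply, smul_eq_mul]
    ring
  rw [hlogα, gradient_const_add_mul_inner_sub_apply_sub (hS.inv.isHermitian.isSelfAdjoint_toEuclideanCLM),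
    gradient_log_gaussDensity hS, gradient_log_gaussDensity hS, lap_gaussDensity_div hS,
    lap_gaussDensity_div hS, hmid, map_smul, map_add]
  set a := toEuclideanCLM (𝕜 := ℝ) S⁻¹ (x - toLp 2 μ₁)
  set b := toEuclideanCLM (𝕜 := ℝ) S⁻¹ (x - toLp 2 μ₂)
  simp only [real_inner_smul_left, inner_add_left, inner_sub_right, inner_neg_right,
    real_inner_self_eq_norm_sq, real_inner_comm a b]
  ring

theorem optimal_weight_kills_bias {D : ℕ}
    (μ₁ μ₂ : Fin D → ℝ) (S : Matrix (Fin D) (Fin D) ℝ)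
    (hS : S.PosDef) (hμ : μ₁ ≠ μ₂) :
    let μ : Fin D → ℝ := fun i => (μ₁ i + μ₂ i) / 2
    let α : EuclideanSpace ℝ (Fin D) → ℝ := fun x =>
      Real.exp ((1 / 2) * quadForm S⁻¹ (fun i => x i - μ i))
    let p₁ := gaussDensity μ₁ S
    let p₂ := gaussDensity μ₂ S
    ∀ x : EuclideanSpace ℝ (Fin D),
      (inner ℝ (gradient (fun y => Real.log (α y)) x)
          (gradient (fun y => Real.log (p₁ y)) x
            - gradient (fun y => Real.log (p₂ y)) x) : ℝ)
        + (1 / 2) * (lap p₁ x / p₁ x - lap p₂ x / p₂ x) = 0 :=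
  optimal_weight_kills_bias_general μ₁ μ₂ S hS
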